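/- With nonnegative weights wₙ ≥ 0 satisfying ∑ wₙ = ∞ (w ∉ ℓ¹), the function T_w = ∑ₙ wₙ gₙ is not differentiable at any point x ∈ D. -/
import Mathlib


open Filter Topology

/-- The (viscosity/Fréchet) subdifferential of `f : ℝ → ℝ`, relative to the domain `s`,
at the point `x`: the set of `c` with
`liminf_{h → 0, x + h ∈ s} (f (x + h) - f x - c * h) / |h| ≥ 0`. -/
def subdifferentialWithin (f : ℝ → ℝ) (s : Set ℝ) (x : ℝ) : Set ℝ :=
  {c | ∀ ε > (0 : ℝ), ∀ᶠ h in 𝓝[≠] (0 : ℝ), x + h ∈ s → -ε ≤ (f (x + h) - f x - c * h) / |h|}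

/-- The superdifferential `∂⁺f(x) = -∂(-f)(x)`. -/
def superdifferentialWithin (f : ℝ → ℝ) (s : Set ℝ) (x : ℝ) : Set ℝ :=
  {c | -c ∈ subdifferentialWithin (fun y => -f y) s x}

/-- The set of midpoints of the connected components of the complement of `s` (the
bounded components being the open intervals between consecutive points of `s`). -/
def midpoints (s : Set ℝ) : Set ℝ :=
  {m | ∃ a ∈ s, ∃ b ∈ s, a < b ∧ Set.Ioo a b ∩ s = ∅ ∧ m = (a + b) / 2}

theorem stmt6
(D : ℕ → Set ℝ) (α : ℕ → ℝ) (ρ : ℝ) (w : ℕ → ℝ)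
    (hD0 : (0 : ℝ) ∈ D 0) (hD1 : (1 : ℝ) ∈ D 0)
    (hDsub : ∀ n, D n ⊆ Set.Icc 0 1)
    (hDfin : ∀ n, (D n).Finite)
    (hDmono : ∀ n, D n ⊆ D (n + 1))
    (hρ : ρ ∈ Set.Ioc (0 : ℝ) 1)
    (hα : Summable α)
    (hgapU : ∀ n, ∀ a ∈ D n, ∀ b ∈ D n, a < b → Set.Ioo a b ∩ D n = ∅ → b - a ≤ α n)
    (hgapL : ∀ n, ∀ a ∈ D n, ∀ b ∈ D n, a < b → ρ * α n ≤ b - a)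
    (hwα : Summable (fun n => |w n * α n|))
    (hwpos : ∀ n, 0 ≤ w n) (hwns : ¬ Summable w)
    (x : ℝ) (hx : x ∈ ⋃ n, D n) :
    ¬ DifferentiableWithinAt ℝ (fun z => ∑' n : ℕ, w n * Metric.infDist z (D n))
        (Set.Icc 0 1) x := by
  intro hdiff
  set T : ℝ → ℝ := fun z => ∑' n : ℕ, w n * Metric.infDist z (D n) with hTdef
  obtain ⟨hρ0, hρ1⟩ := hρ
  have hmono : ∀ m n : ℕ, m ≤ n → D m ⊆ D n := by
    intro m n hmn
    induction hmn with
    | refl => exact subset_rfl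
    | step _ ih => exact ih.trans (hDmono _)
  have h0 : ∀ n, (0:ℝ) ∈ D n := fun n => hmono 0 n (Nat.zero_le n) hD0
  have h1 : ∀ n, (1:ℝ) ∈ D n := fun n => hmono 0 n (Nat.zero_le n) hD1
  have hne : ∀ n, (D n).Nonempty := fun n => ⟨0, h0 n⟩
  -- positivity of α
  have hαpos : ∀ n, 0 < α n := by
    intro n
    obtain ⟨b, hbS, hbmin⟩ := Set.exists_min_image {d ∈ D n | 0 < d} id
      ((hDfin n).subset (fun d hd => hd.1)) ⟨1, h1 n, one_pos⟩
    have hioo : Set.Ioo (0:ℝ) b ∩ D n = ∅ := by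
      ext d
      simp only [Set.mem_inter_iff, Set.mem_Ioo, Set.mem_empty_iff_false, iff_false, not_and]
      rintro ⟨hd0, hdb⟩ hdD
      exact absurd (hbmin d ⟨hdD, hd0⟩) (not_le.mpr hdb)
    have := hgapU n 0 (h0 n) b hbS.1 hbS.2 hioo
    linarith [hbS.2]
  -- infDist bound
  have hbnd : ∀ n, ∀ z ∈ Set.Icc (0:ℝ) 1, Metric.infDist z (D n) ≤ |α n| := by
    intro n z hz
    by_cases hzD : z ∈ D n
    · rw [Metric.infDist_zero_of_mem hzD]; exact abs_nonneg _
    · obtain ⟨a, haS, hamax⟩ := Set.exists_max_image {d ∈ D n | d ≤ z} id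
        ((hDfin n).subset fun d hd => hd.1) ⟨0, h0 n, hz.1⟩
      obtain ⟨b, hbS, hbmin⟩ := Set.exists_min_image {d ∈ D n | z ≤ d} id
        ((hDfin n).subset fun d hd => hd.1) ⟨1, h1 n, hz.2⟩
      have hab : a < z := lt_of_le_of_ne haS.2 (fun h => hzD (h ▸ haS.1))
      have hzb : z < b := lt_of_le_of_ne hbS.2 (fun h => hzD (h.symm ▸ hbS.1))
      have hioo : Set.Ioo a b ∩ D n = ∅ := by
        ext d
        simp only [Set.mem_inter_iff, Set.mem_Ioo, Set.mem_empty_iff_false, iff_false, not_and]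
        rintro ⟨had, hdb⟩ hdD
        rcases le_total d z with h | h
        · exact absurd (hamax d ⟨hdD, h⟩) (not_le.mpr had)
        · exact absurd (hbmin d ⟨hdD, h⟩) (not_le.mpr hdb)
      have hgap := hgapU n a haS.1 b hbS.1 (hab.trans hzb) hioo
      calc Metric.infDist z (D n) ≤ dist z a := Metric.infDist_le_dist_of_mem haS.1
        _ = z - a := by rw [Real.dist_eq, abs_of_pos (by linarith)]
        _ ≤ b - a := by linarith
        _ ≤ α n := hgap
        _ ≤ |α n| := le_abs_self _
  -- summability
  have hwα' : Summable (fun n => w n * |α n|) := by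
    have heq : (fun n => w n * |α n|) = fun n => |w n * α n| := by
      funext n; rw [abs_mul, abs_of_nonneg (hwpos n)]
    rw [heq]; exact hwα
  have hsum : ∀ z ∈ Set.Icc (0:ℝ) 1, Summable (fun n => w n * Metric.infDist z (D n)) := by
    intro z hz
    exact Summable.of_nonneg_of_le (fun n => mul_nonneg (hwpos n) Metric.infDist_nonneg)
      (fun n => mul_le_mul_of_nonneg_left (hbnd n z hz) (hwpos n)) hwα'
  obtain ⟨N, hxN⟩ := Set.mem_iUnion.mp hx
  have hx01 : x ∈ Set.Icc (0:ℝ) 1 := hDsub N hxN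
  have hxDn : ∀ n, N ≤ n → x ∈ D n := fun n h => hmono N n h hxN
  set C : ℝ := ∑ n ∈ Finset.range N, w n with hC
  have hC0 : 0 ≤ C := Finset.sum_nonneg fun n _ => hwpos n
  set c : ℝ := derivWithin T (Set.Icc 0 1) x with hc
  have hderiv : HasDerivWithinAt T c (Set.Icc 0 1) x := hdiff.hasDerivWithinAt
  have htend := hasDerivWithinAt_iff_tendsto_slope.mp hderiv
  -- choose M
  have htop := (not_summable_iff_tendsto_nat_atTop_of_nonneg hwpos).mp hwns
  obtain ⟨M, hM1, hM2⟩ := ((htop.eventually_ge_atTop (C + (C + |c| + 2))).and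
    (eventually_ge_atTop (N + 1))).exists
  have hNM : N ≤ M := by omega
  set F := Finset.Ico N M with hF
  have hFsub : F ⊆ Finset.range M := fun n hn =>
    Finset.mem_range.mpr (Finset.mem_Ico.mp hn).2
  have hFsum : C + |c| + 2 ≤ ∑ n ∈ F, w n := by
    rw [hF, Finset.sum_Ico_eq_sub _ hNM, ← hC]
    linarith
  have hFne : F.Nonempty := ⟨N, Finset.mem_Ico.mpr ⟨le_refl N, by omega⟩⟩
  set δ : ℝ := ρ * (F.inf' hFne α) / 2 with hδ
  have hδpos : 0 < δ := by
    obtain ⟨i, hi, hieq⟩ := Finset.exists_mem_eq_inf' hFne α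
    rw [hδ, hieq]
    have := hαpos i
    positivity
  have hδle : ∀ n ∈ F, 2 * δ ≤ ρ * α n := by
    intro n hn
    have h2 := mul_le_mul_of_nonneg_left (Finset.inf'_le α hn) hρ0.le
    rw [hδ]; linarith
  -- key slope bound
  have key : ∀ z ∈ Set.Icc (0:ℝ) 1, z ≠ x → |z - x| ≤ δ → |c| + 2 ≤ |slope T x z| := by
    intro z hz hzx hzd
    have hh0 : z - x ≠ 0 := sub_ne_zero.mpr hzx
    have habs : 0 < |z - x| := abs_pos.mpr hh0
    -- lower bound for n ∈ F
    have hlow : ∀ n ∈ F, |z - x| ≤ Metric.infDist z (D n) := by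
      intro n hn
      have hnN : N ≤ n := (Finset.mem_Ico.mp hn).1
      by_contra hcon
      rw [not_le, Metric.infDist_lt_iff (hne n)] at hcon
      obtain ⟨d, hdD, hdlt⟩ := hcon
      rw [Real.dist_eq] at hdlt
      rcases eq_or_ne d x with rfl | hdx
      · rw [abs_sub_comm z d] at hdlt
        exact absurd hdlt (lt_irrefl _)
      · have hgap : ρ * α n ≤ |d - x| := by
          rcases hdx.lt_or_gt with hlt | hlt
          · have := hgapL n d hdD x (hxDn n hnN) hlt
            rw [abs_of_neg (by linarith)]; linarith
          · have := hgapL n x (hxDn n hnN) d hdD hlt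
            rw [abs_of_pos (by linarith)]; linarith
        have h2 : 2 * |z - x| ≤ |d - x| := by
          have := hδle n hn
          linarith
        have htri : |d - x| ≤ |d - z| + |z - x| := abs_sub_le d z x
        rw [abs_sub_comm z d] at hdlt
        linarith
    have hsz := hsum z hz
    have hsx := hsum x hx01
    set l : ℕ → ℝ := fun n => (if n ∈ F then w n * |z - x| else 0) +
        (if n ∈ Finset.range N then -(w n * |z - x|) else 0) with hldef
    have hlsupp : ∀ n ∉ Finset.range M, l n = 0 := by
      intro n hnm
      have hnF : n ∉ F := fun hnF => hnm (hFsub hnF)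
      have hnr : n ∉ Finset.range N := fun hnr =>
        hnm (Finset.mem_range.mpr (lt_of_lt_of_le (Finset.mem_range.mp hnr) hNM))
      simp only [hldef, if_neg hnF, if_neg hnr, add_zero]
    have hlsum : Summable l := summable_of_ne_finset_zero hlsupp
    have hle : ∀ n, l n ≤ w n * Metric.infDist z (D n) - w n * Metric.infDist x (D n) := by
      intro n
      by_cases hnF : n ∈ F
      · have hnN : N ≤ n := (Finset.mem_Ico.mp hnF).1
        have hnr : n ∉ Finset.range N := by simp only [Finset.mem_range]; omega
        have hx0 : Metric.infDist x (D n) = 0 := Metric.infDist_zero_of_mem (hxDn n hnN)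
        simp only [hldef, if_pos hnF, if_neg hnr, add_zero, hx0, mul_zero, sub_zero]
        exact mul_le_mul_of_nonneg_left (hlow n hnF) (hwpos n)
      · by_cases hnr : n ∈ Finset.range N
        · simp only [hldef, if_neg hnF, if_pos hnr, zero_add]
          have hlip : Metric.infDist x (D n) ≤ Metric.infDist z (D n) + |z - x| := by
            have h := Metric.infDist_le_infDist_add_dist (x := x) (y := z) (s := D n)
            rw [Real.dist_eq, abs_sub_comm] at h
            exact h
          have := mul_le_mul_of_nonneg_left hlip (hwpos n)
          rw [mul_add] at this
          linarith
        · have hnN : N ≤ n := by simp only [Finset.mem_range, not_lt] at hnr; exact hnr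
          have hx0 : Metric.infDist x (D n) = 0 := Metric.infDist_zero_of_mem (hxDn n hnN)
          simp only [hldef, if_neg hnF, if_neg hnr, add_zero, hx0, mul_zero, sub_zero]
          exact mul_nonneg (hwpos n) Metric.infDist_nonneg
    have hnum : (∑ n ∈ F, w n) * |z - x| - C * |z - x| ≤ T z - T x := by
      have h1 : T z - T x
          = ∑' n, (w n * Metric.infDist z (D n) - w n * Metric.infDist x (D n)) :=
        (Summable.tsum_sub hsz hsx).symm
      have h2 := Summable.tsum_le_tsum hle hlsum (hsz.sub hsx)
      have h3 : ∑' n, l n = (∑ n ∈ F, w n) * |z - x| - C * |z - x| := by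
        rw [tsum_eq_sum hlsupp]
        rw [hldef]
        rw [Finset.sum_add_distrib, Finset.sum_ite_mem, Finset.sum_ite_mem]
        rw [Finset.inter_eq_right.mpr hFsub,
          Finset.inter_eq_right.mpr (Finset.range_subset_range.mpr hNM)]
        rw [Finset.sum_neg_distrib, ← Finset.sum_mul, ← Finset.sum_mul, ← hC]
        ring
      rw [h1]
      rw [h3] at h2
      exact h2
    have h4 : (|c| + 2) * |z - x| ≤ T z - T x := by
      nlinarith [hnum, hFsum, habs.le]
    have hslope : |slope T x z| = |T z - T x| / |z - x| := by
      rw [slope_def_field, abs_div]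
    rw [hslope, le_div_iff₀ habs]
    calc (|c| + 2) * |z - x| ≤ T z - T x := h4
      _ ≤ |T z - T x| := le_abs_self _
  -- final contradiction
  have hball : (slope T x) ⁻¹' Metric.ball c 1 ∈ 𝓝[Set.Icc (0:ℝ) 1 \ {x}] x :=
    htend (Metric.ball_mem_nhds c one_pos)
  obtain ⟨ε, hε, hsub⟩ := Metric.mem_nhdsWithin_iff.mp hball
  obtain ⟨z, hz, hzx, hzd, hzball⟩ :
      ∃ z, z ∈ Set.Icc (0:ℝ) 1 ∧ z ≠ x ∧ |z - x| ≤ δ ∧ z ∈ Metric.ball x ε := by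
    rcases lt_or_eq_of_le hx01.2 with hx1 | hx1
    · refine ⟨x + min δ (min (1 - x) (ε/2)), ?_, ?_, ?_, ?_⟩
      · constructor
        · have : 0 < min δ (min (1 - x) (ε/2)) := lt_min hδpos (lt_min (by linarith) (by linarith))
          linarith [hx01.1]
        · have : min δ (min (1 - x) (ε/2)) ≤ 1 - x :=
            le_trans (min_le_right _ _) (min_le_left _ _)
          linarith
      · have : 0 < min δ (min (1 - x) (ε/2)) := lt_min hδpos (lt_min (by linarith) (by linarith))
        intro h; apply absurd h; intro h'; nlinarith [h']
      · have h1 : 0 < min δ (min (1 - x) (ε/2)) := lt_min hδpos (lt_min (by linarith) (by linarith))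
        rw [add_sub_cancel_left, abs_of_pos h1]
        exact min_le_left _ _
      · have h1 : 0 < min δ (min (1 - x) (ε/2)) := lt_min hδpos (lt_min (by linarith) (by linarith))
        have h2 : min δ (min (1 - x) (ε/2)) ≤ ε/2 :=
          le_trans (min_le_right _ _) (min_le_right _ _)
        rw [Metric.mem_ball, Real.dist_eq, add_sub_cancel_left, abs_of_pos h1]
        linarith
    · refine ⟨x - min δ (min 1 (ε/2)), ?_, ?_, ?_, ?_⟩
      · have h1 : min δ (min 1 (ε/2)) ≤ 1 := le_trans (min_le_right _ _) (min_le_left _ _)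
        have h2 : 0 < min δ (min 1 (ε/2)) := lt_min hδpos (lt_min one_pos (by linarith))
        constructor
        · linarith [hx1.symm ▸ le_refl x]
        · linarith [hx01.2]
      · have h2 : 0 < min δ (min 1 (ε/2)) := lt_min hδpos (lt_min one_pos (by linarith))
        intro h; nlinarith [h]
      · have h2 : 0 < min δ (min 1 (ε/2)) := lt_min hδpos (lt_min one_pos (by linarith))
        rw [sub_sub_cancel_left, abs_neg, abs_of_pos h2]
        exact min_le_left _ _
      · have h2 : 0 < min δ (min 1 (ε/2)) := lt_min hδpos (lt_min one_pos (by linarith))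
        have h3 : min δ (min 1 (ε/2)) ≤ ε/2 := le_trans (min_le_right _ _) (min_le_right _ _)
        rw [Metric.mem_ball, Real.dist_eq, sub_sub_cancel_left, abs_neg, abs_of_pos h2]
        linarith
  have hmem : z ∈ Metric.ball x ε ∩ (Set.Icc (0:ℝ) 1 \ {x}) := ⟨hzball, hz, hzx⟩
  have hpre := hsub hmem
  rw [Set.mem_preimage, Metric.mem_ball, Real.dist_eq] at hpre
  have hkey := key z hz hzx hzd
  have htri := abs_sub_abs_le_abs_sub (slope T x z) c
  linarith
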